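/- Let A ∈ ℤ^{d×n} be a matrix whose columns A₁,…,A_n are distinct vectors in {0,1}^d, suppose there exists w ∈ ℝ^d with wᵀA_j = 1 for all j (homogeneity), and suppose that conv{A₁,…,A_n} = [0,1]^d ∩ affineSpan_ℝ{A₁,…,A_n} and that {0,1}^d ∩ conv{A₁,…,A_n} = {A₁,…,A_n}. Then for every i ∈ {1,…,n} and every b ∈ ℤ^d for which there exists x ∈ ℕ^n with Ax = b, one has sup{x_i : x ∈ ℝ^n, x ≥ 0, Ax = b} = sup{x_i : x ∈ ℕ^n, Ax = b}. (The 'if' direction of Theorem 4.6 of the paper, instantiated with the cube-section form of a compressed polytope.) -/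

import Mathlib

noncomputable section

/-- The unit hypercube `[0,1]^d ⊆ ℝ^d`. -/
def stdCube (d : ℕ) : Set (Fin d → ℝ) := {x | ∀ i, x i ∈ Set.Icc (0 : ℝ) 1}

/-- The set of `0/1` points `{0,1}^d ⊆ ℝ^d`. -/
def zeroOneSet (d : ℕ) : Set (Fin d → ℝ) := {x | ∀ i, x i = 0 ∨ x i = 1}

/-- The `j`-th column of the integer matrix `A`, viewed as a point of `ℝ^d`. -/
def col {d n : ℕ} (A : Matrix (Fin d) (Fin n) ℤ) (j : Fin n) : Fin d → ℝ :=
  fun i => (A i j : ℝ)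

lemma repExists {d n : ℕ} (A : Matrix (Fin d) (Fin n) ℤ) (p : Fin d → ℝ)
    (hp : p ∈ convexHull ℝ (Set.range (col A))) :
    ∃ w : Fin n → ℝ, (∀ j, 0 ≤ w j) ∧ ∑ j, w j = 1 ∧
      ∀ i, p i = ∑ j, w j * (A i j : ℝ) := by
  rw [convexHull_range_eq_exists_affineCombination] at hp
  obtain ⟨s, w, hw0, hw1, hcomb⟩ := hp
  refine ⟨fun j => if j ∈ s then w j else 0, ?_, ?_, ?_⟩
  · intro j; by_cases h : j ∈ s <;> simp [h, hw0 j]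
  · rw [Finset.sum_ite_mem, Finset.univ_inter, hw1]
  · intro i
    rw [s.affineCombination_eq_linear_combination _ _ hw1] at hcomb
    rw [← hcomb]
    simp only [Finset.sum_apply, Pi.smul_apply, smul_eq_mul]
    simp only [ite_mul, zero_mul]
    rw [Finset.sum_ite_mem, Finset.univ_inter]
    simp [col]

lemma memHull {d n : ℕ} (A : Matrix (Fin d) (Fin n) ℤ) (w : Fin n → ℝ)
    (h0 : ∀ j, 0 ≤ w j) (h1 : ∑ j, w j = 1) :
    (fun i => ∑ j, w j * (A i j : ℝ)) ∈ convexHull ℝ (Set.range (col A)) := by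
  have := (convex_convexHull ℝ (Set.range (col A))).sum_mem
    (t := Finset.univ) (w := w) (z := fun j => col A j)
    (fun j _ => h0 j) h1 (fun j _ => subset_convexHull ℝ _ (Set.mem_range_self j))
  convert this using 1
  funext i
  simp [col]

/-- The coordinate bounds for the LP value. -/
def fcoord {d n : ℕ} (A : Matrix (Fin d) (Fin n) ℤ) (i₀ : Fin n) (b : Fin d → ℤ)
    (k : ℕ) (i : Fin d) : ℕ :=
  if A i i₀ = 1 then (b i).toNat else k - (b i).toNat

/-- The LP optimum, as a natural number. -/
def tstar {d n : ℕ} (A : Matrix (Fin d) (Fin n) ℤ) (i₀ : Fin n) (b : Fin d → ℤ)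
    (k : ℕ) : ℕ :=
  (insert k (Finset.univ.image (fcoord A i₀ b k))).min' (Finset.insert_nonempty _ _)

lemma tstar_le_base {d n : ℕ} (A : Matrix (Fin d) (Fin n) ℤ) (i₀ : Fin n)
    (b : Fin d → ℤ) (k : ℕ) : tstar A i₀ b k ≤ k :=
  Finset.min'_le _ _ (Finset.mem_insert_self _ _)

lemma tstar_le_coord {d n : ℕ} (A : Matrix (Fin d) (Fin n) ℤ) (i₀ : Fin n)
    (b : Fin d → ℤ) (k : ℕ) (i : Fin d) : tstar A i₀ b k ≤ fcoord A i₀ b k i :=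
  Finset.min'_le _ _ (Finset.mem_insert_of_mem
    (Finset.mem_image_of_mem _ (Finset.mem_univ i)))

lemma le_tstar {d n : ℕ} (A : Matrix (Fin d) (Fin n) ℤ) (i₀ : Fin n)
    (b : Fin d → ℤ) (k : ℕ) (c : ℕ) (h1 : c ≤ k) (h2 : ∀ i, c ≤ fcoord A i₀ b k i) :
    c ≤ tstar A i₀ b k := by
  apply Finset.le_min'
  intro y hy
  rcases Finset.mem_insert.1 hy with rfl | hy
  · exact h1
  · obtain ⟨i, -, rfl⟩ := Finset.mem_image.1 hy
    exact h2 i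

lemma tstar_cases {d n : ℕ} (A : Matrix (Fin d) (Fin n) ℤ) (i₀ : Fin n)
    (b : Fin d → ℤ) (k : ℕ) :
    tstar A i₀ b k = k ∨ ∃ i, tstar A i₀ b k = fcoord A i₀ b k i := by
  have := Finset.min'_mem (insert k (Finset.univ.image (fcoord A i₀ b k)))
    (Finset.insert_nonempty _ _)
  rcases Finset.mem_insert.1 this with h | h
  · exact Or.inl h
  · obtain ⟨i, -, hi⟩ := Finset.mem_image.1 h
    exact Or.inr ⟨i, hi.symm⟩

lemma master {d n : ℕ} (A : Matrix (Fin d) (Fin n) ℤ)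
    (h01 : ∀ j, col A j ∈ zeroOneSet d)
    (hcube : convexHull ℝ (Set.range (col A))
      = stdCube d ∩ (affineSpan ℝ (Set.range (col A)) : Set (Fin d → ℝ)))
    (i₀ : Fin n) :
    ∀ (k : ℕ) (b : Fin d → ℤ),
      (∃ y : Fin n → ℝ, (∀ j, 0 ≤ y j) ∧ (∑ j, y j) = (k : ℝ) ∧
        ∀ i, ∑ j, (A i j : ℝ) * y j = (b i : ℝ)) →
      ∃ z : Fin n → ℕ, (∀ i, ∑ j, A i j * (z j : ℤ) = b i) ∧ (∑ j, z j) = k ∧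
        tstar A i₀ b k ≤ z i₀ := by
  have hA01 : ∀ i j, A i j = 0 ∨ A i j = 1 := by
    intro i j
    have h := h01 j i
    rw [show col A j i = ((A i j : ℤ) : ℝ) from rfl] at h
    rcases h with h | h
    · exact Or.inl (by exact_mod_cast h)
    · exact Or.inr (by exact_mod_cast h)
  have hAnn : ∀ i j, (0 : ℝ) ≤ (A i j : ℝ) := by
    intro i j
    have h := h01 j i
    rw [show col A j i = ((A i j : ℤ) : ℝ) from rfl] at h
    rcases h with h | h <;> rw [h] <;> norm_num
  have hAle : ∀ i j, ((A i j : ℝ)) ≤ 1 := by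
    intro i j
    have h := h01 j i
    rw [show col A j i = ((A i j : ℤ) : ℝ) from rfl] at h
    rcases h with h | h <;> rw [h] <;> norm_num
  intro k
  induction k with
  | zero =>
    rintro b ⟨y, hy0, hys, hyA⟩
    have hy : ∀ j ∈ Finset.univ, y j = 0 :=
      (Finset.sum_eq_zero_iff_of_nonneg (fun j _ => hy0 j)).1 (by simpa using hys)
    have hb : ∀ i, b i = 0 := by
      intro i
      have : (b i : ℝ) = 0 := by
        rw [← hyA i]
        apply Finset.sum_eq_zero
        intro j hj
        rw [hy j hj, mul_zero]
      exact_mod_cast this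
    refine ⟨0, ?_, by simp, ?_⟩
    · intro i; simp [hb i]
    · have := tstar_le_base A i₀ b 0
      omega
  | succ k ih =>
    rintro b ⟨y, hy0, hys, hyA⟩
    -- basic bounds on b
    have hb0 : ∀ i, (0 : ℤ) ≤ b i := by
      intro i
      have : (0 : ℝ) ≤ (b i : ℝ) := by
        rw [← hyA i]
        exact Finset.sum_nonneg fun j _ => mul_nonneg (hAnn i j) (hy0 j)
      exact_mod_cast this
    have hsum : ∑ j, y j = (k : ℝ) + 1 := by rw [hys]; push_cast; ring
    have hbk : ∀ i, b i ≤ (k : ℤ) + 1 := by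
      intro i
      have hr : (b i : ℝ) ≤ (k : ℝ) + 1 := by
        rw [← hyA i, ← hsum]
        apply Finset.sum_le_sum
        intro j _
        nlinarith [hAle i j, hAnn i j, hy0 j]
      have h2 : ((b i : ℝ)) ≤ (((k : ℤ) + 1 : ℤ) : ℝ) := by push_cast; linarith
      exact_mod_cast h2
    have hk1 : (0 : ℝ) < (k : ℝ) + 1 := by positivity
    set p : Fin d → ℝ := fun i => (b i : ℝ) / ((k : ℝ) + 1) with hp_def
    have hp : p ∈ convexHull ℝ (Set.range (col A)) := by
      have h1 : ∑ j, y j / ((k : ℝ) + 1) = 1 := by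
        rw [← Finset.sum_div, hys]
        push_cast
        field_simp
      have := memHull A (fun j => y j / ((k : ℝ) + 1))
        (fun j => div_nonneg (hy0 j) hk1.le) h1
      convert this using 1
      funext i
      rw [hp_def]
      simp only
      rw [← hyA i, Finset.sum_div]
      congr 1
      funext j
      ring
    -- find the column to subtract
    obtain ⟨j, Hj1, Hj2, Hjt⟩ :
        ∃ j : Fin n, (∀ i, A i j = 1 → 1 ≤ b i) ∧ (∀ i, A i j = 0 → b i ≤ (k : ℤ)) ∧
          (j = i₀ ∨ tstar A i₀ b (k + 1) = 0) := by
      rcases Nat.eq_zero_or_pos (tstar A i₀ b (k + 1)) with hT0 | hT1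
      · -- take any column in the support of a convex representation of p
        obtain ⟨w, hw0, hw1, hwrep⟩ := repExists A p hp
        have : ∃ j, 0 < w j := by
          by_contra h
          push_neg at h
          have : ∀ j ∈ Finset.univ, w j = 0 := fun j _ => le_antisymm (h j) (hw0 j)
          rw [Finset.sum_eq_zero this] at hw1
          norm_num at hw1
        obtain ⟨j, hwj⟩ := this
        refine ⟨j, ?_, ?_, Or.inr hT0⟩
        · intro i hi
          have hlow : w j ≤ p i := by
            rw [hwrep i]
            have : w j * (A i j : ℝ) = w j := by rw [hi]; push_cast; ring
            calc w j = w j * (A i j : ℝ) := this.symm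
              _ ≤ ∑ m, w m * (A i m : ℝ) :=
                Finset.single_le_sum (fun m _ => mul_nonneg (hw0 m) (hAnn i m))
                  (Finset.mem_univ j)
          have : (0 : ℝ) < (b i : ℝ) := by
            have hpi : 0 < p i := lt_of_lt_of_le hwj hlow
            rw [hp_def] at hpi
            simp only at hpi
            by_contra hc
            push_neg at hc
            have : (b i : ℝ) / ((k : ℝ) + 1) ≤ 0 := div_nonpos_of_nonpos_of_nonneg hc hk1.le
            linarith
          have : (0 : ℤ) < b i := by exact_mod_cast this
          omega
        · intro i hi
          have hkey : p i + w j ≤ 1 := by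
            have heq : p i + w j
                = ∑ m, (w m * (A i m : ℝ) + if m = j then w j else 0) := by
              rw [Finset.sum_add_distrib, Finset.sum_ite_eq' Finset.univ j fun _ => w j]
              simp [hwrep i]
            rw [heq, ← hw1]
            apply Finset.sum_le_sum
            intro m _
            by_cases hm : m = j
            · subst hm
              rw [hi]
              simp
            · simp only [hm, if_false, add_zero]
              nlinarith [hAle i m, hAnn i m, hw0 m]
          have : p i < 1 := by linarith
          have : (b i : ℝ) < (k : ℝ) + 1 := by
            rw [hp_def] at this
            simp only at this
            rw [div_lt_one hk1] at this
            exact this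
          have h2 : b i < (k : ℤ) + 1 := by exact_mod_cast this
          omega
      · -- tstar ≥ 1 : take j = i₀
        refine ⟨i₀, ?_, ?_, Or.inl rfl⟩
        · intro i hi
          have h := tstar_le_coord A i₀ b (k + 1) i
          rw [fcoord, if_pos hi] at h
          have := hb0 i
          omega
        · intro i hi
          have h := tstar_le_coord A i₀ b (k + 1) i
          rw [fcoord, if_neg (by omega)] at h
          have := hb0 i
          omega
    -- the reduced right-hand side
    set b' : Fin d → ℤ := fun i => b i - A i j with hb'_def
    have hb'0 : ∀ i, (0 : ℤ) ≤ b' i := by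
      intro i
      rcases hA01 i j with h | h
      · simp [hb'_def, h, hb0 i]
      · simp [hb'_def, h]
        have := Hj1 i h
        omega
    have hb'k : ∀ i, b' i ≤ (k : ℤ) := by
      intro i
      rcases hA01 i j with h | h
      · simp [hb'_def, h]
        exact Hj2 i h
      · simp [hb'_def, h]
        have := hbk i
        omega
    -- an LP certificate for b' with total mass k
    have hb'y : ∃ y' : Fin n → ℝ, (∀ m, 0 ≤ y' m) ∧ (∑ m, y' m) = (k : ℝ) ∧
        ∀ i, ∑ m, (A i m : ℝ) * y' m = (b' i : ℝ) := by
      rcases Nat.eq_zero_or_pos k with hk0 | hkpos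
      · -- k = 0 : then b' = 0 and we take y' = 0
        subst hk0
        have hb'z : ∀ i, b' i = 0 := by
          intro i
          have h1 := hb'0 i
          have h2 := hb'k i
          omega
        exact ⟨0, fun m => le_refl 0, by simp, fun i => by simp [hb'z i]⟩
      · -- k ≥ 1 : use the compressedness hypothesis
        have hkR : (0 : ℝ) < (k : ℝ) := by exact_mod_cast hkpos
        set q : Fin d → ℝ := fun i => (b' i : ℝ) / (k : ℝ) with hq_def
        have hq_cube : q ∈ stdCube d := by
          intro i
          constructor
          · apply div_nonneg _ hkR.le
            exact_mod_cast hb'0 i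
          · rw [div_le_one hkR]
            exact_mod_cast hb'k i
        have hq_span : q ∈ (affineSpan ℝ (Set.range (col A)) : Set (Fin d → ℝ)) := by
          have hps : p ∈ (affineSpan ℝ (Set.range (col A)) : Set (Fin d → ℝ)) :=
            convexHull_subset_affineSpan _ hp
          have hcs : col A j ∈ (affineSpan ℝ (Set.range (col A)) : Set (Fin d → ℝ)) :=
            subset_affineSpan ℝ _ (Set.mem_range_self j)
          have hmem := AffineSubspace.smul_vsub_vadd_mem
            (affineSpan ℝ (Set.range (col A))) ((1 : ℝ) / (k : ℝ)) hps hcs hps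
          have : q = ((1 : ℝ) / (k : ℝ)) • (p -ᵥ col A j) +ᵥ p := by
            funext i
            simp only [vsub_eq_sub, vadd_eq_add, Pi.add_apply, Pi.smul_apply, Pi.sub_apply,
              smul_eq_mul, hq_def, hp_def, hb'_def, col]
            push_cast
            field_simp
            ring
          rw [this]
          exact hmem
        have hq : q ∈ convexHull ℝ (Set.range (col A)) := by
          rw [hcube]
          exact ⟨hq_cube, hq_span⟩
        obtain ⟨w', hw'0, hw'1, hw'rep⟩ := repExists A q hq
        refine ⟨fun m => (k : ℝ) * w' m, fun m => mul_nonneg hkR.le (hw'0 m), ?_, ?_⟩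
        · rw [← Finset.mul_sum, hw'1, mul_one]
        · intro i
          have : ∑ m, (A i m : ℝ) * ((k : ℝ) * w' m) = (k : ℝ) * ∑ m, w' m * (A i m : ℝ) := by
            rw [Finset.mul_sum]
            congr 1
            funext m
            ring
          rw [this, ← hw'rep i, hq_def]
          field_simp
    obtain ⟨z', hz'A, hz'S, hz'T⟩ := ih b' hb'y
    refine ⟨fun m => z' m + if m = j then 1 else 0, ?_, ?_, ?_⟩
    · intro i
      have hsplit : ∑ m, A i m * ((z' m + if m = j then 1 else 0 : ℕ) : ℤ)
          = (∑ m, A i m * (z' m : ℤ)) + ∑ m, (if m = j then A i m else 0) := by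
        rw [← Finset.sum_add_distrib]
        congr 1
        funext m
        by_cases hm : m = j <;> simp [hm] <;> ring
      rw [hsplit, hz'A i, Finset.sum_ite_eq' Finset.univ j fun m => A i m]
      simp [hb'_def]
    · rw [Finset.sum_add_distrib, hz'S, Finset.sum_ite_eq' Finset.univ j fun _ => (1 : ℕ)]
      simp
    · rcases Hjt with hji | hT0
      · -- j = i₀ and we gained one unit
        subst hji
        have hfun : (fun m => z' m + if m = j then 1 else 0) j = z' j + 1 := by simp
        rw [hfun]
        have hstep : tstar A j b (k + 1) ≤ tstar A j b' k + 1 := by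
          rcases Nat.eq_zero_or_pos (tstar A j b (k + 1)) with h0 | h1
          · omega
          · have : tstar A j b (k + 1) - 1 ≤ tstar A j b' k := by
              apply le_tstar
              · have := tstar_le_base A j b (k + 1)
                omega
              · intro i
                have hc := tstar_le_coord A j b (k + 1) i
                rcases hA01 i j with h | h
                · have hne : ¬ (A i j = 1) := by omega
                  rw [fcoord, if_neg hne] at hc
                  rw [fcoord, if_neg hne]
                  have hb0i := hb0 i
                  have hbb : b' i = b i := by rw [hb'_def]; simp [h]
                  rw [hbb]
                  omega
                · rw [fcoord, if_pos h] at hc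
                  rw [fcoord, if_pos h]
                  have hb1i := Hj1 i h
                  have hbb : b' i = b i - 1 := by rw [hb'_def]; simp [h]
                  rw [hbb]
                  omega
            omega
        omega
      · rw [hT0]
        exact Nat.zero_le _

lemma upper {d n : ℕ} (A : Matrix (Fin d) (Fin n) ℤ)
    (h01 : ∀ j, col A j ∈ zeroOneSet d)
    (hhom : ∃ w : Fin d → ℝ, ∀ j : Fin n, ∑ i, w i * col A j i = 1)
    (i₀ : Fin n) (b : Fin d → ℤ) (k : ℕ) (x : Fin n → ℕ)
    (hx : ∀ i, ∑ j, A i j * (x j : ℤ) = b i) (hk : ∑ j, x j = k)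
    (y : Fin n → ℝ) (hy0 : ∀ j, 0 ≤ y j)
    (hyA : ∀ i, ∑ j, (A i j : ℝ) * y j = (b i : ℝ)) :
    y i₀ ≤ (tstar A i₀ b k : ℝ) := by
  have hA01 : ∀ i j, A i j = 0 ∨ A i j = 1 := by
    intro i j
    have h := h01 j i
    rw [show col A j i = ((A i j : ℤ) : ℝ) from rfl] at h
    rcases h with h | h
    · exact Or.inl (by exact_mod_cast h)
    · exact Or.inr (by exact_mod_cast h)
  have hAnn : ∀ i j, (0 : ℝ) ≤ (A i j : ℝ) := by
    intro i j
    rcases hA01 i j with h | h <;> rw [h] <;> norm_num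
  have hAle : ∀ i j, ((A i j : ℝ)) ≤ 1 := by
    intro i j
    rcases hA01 i j with h | h <;> rw [h] <;> norm_num
  have hb0 : ∀ i, (0 : ℤ) ≤ b i := by
    intro i
    rw [← hx i]
    apply Finset.sum_nonneg
    intro j _
    rcases hA01 i j with h | h <;> simp [h]
  have hbk : ∀ i, b i ≤ (k : ℤ) := by
    intro i
    rw [← hx i]
    have : ((k : ℤ)) = ∑ j, (x j : ℤ) := by exact_mod_cast (congrArg (Nat.cast : ℕ → ℤ) hk).symm
    rw [this]
    apply Finset.sum_le_sum
    intro j _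
    rcases hA01 i j with h | h <;> simp [h]
  obtain ⟨w, hw⟩ := hhom
  have key : ∀ u : Fin n → ℝ, (∀ i, ∑ j, (A i j : ℝ) * u j = (b i : ℝ)) →
      ∑ j, u j = ∑ i, w i * (b i : ℝ) := by
    intro u hu
    calc ∑ j, u j = ∑ j, (∑ i, w i * (A i j : ℝ)) * u j := by
          apply Finset.sum_congr rfl
          intro j _
          rw [show (∑ i, w i * (A i j : ℝ)) = ∑ i, w i * col A j i from rfl, hw j, one_mul]
      _ = ∑ j, ∑ i, w i * (A i j : ℝ) * u j := by
          apply Finset.sum_congr rfl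
          intro j _
          rw [Finset.sum_mul]
      _ = ∑ i, ∑ j, w i * (A i j : ℝ) * u j := Finset.sum_comm
      _ = ∑ i, w i * ∑ j, (A i j : ℝ) * u j := by
          apply Finset.sum_congr rfl
          intro i _
          rw [Finset.mul_sum]
          apply Finset.sum_congr rfl
          intro j _
          ring
      _ = ∑ i, w i * (b i : ℝ) := by
          apply Finset.sum_congr rfl
          intro i _
          rw [hu i]
  have hxR : ∀ i, ∑ j, (A i j : ℝ) * (x j : ℝ) = (b i : ℝ) := by
    intro i
    exact_mod_cast congrArg (Int.cast : ℤ → ℝ) (hx i)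
  have hyS : ∑ j, y j = (k : ℝ) := by
    rw [key y hyA, ← key (fun j => (x j : ℝ)) hxR]
    exact_mod_cast congrArg (Nat.cast : ℕ → ℝ) hk
  have hyk : y i₀ ≤ (k : ℝ) := by
    rw [← hyS]
    exact Finset.single_le_sum (fun j _ => hy0 j) (Finset.mem_univ i₀)
  have hyc : ∀ i, y i₀ ≤ (fcoord A i₀ b k i : ℝ) := by
    intro i
    have ht : ((b i).toNat : ℤ) = b i := Int.toNat_of_nonneg (hb0 i)
    have htR : ((b i).toNat : ℝ) = (b i : ℝ) := by exact_mod_cast ht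
    rcases hA01 i i₀ with h | h
    · -- A i i₀ = 0
      have hle : y i₀ + ∑ j, (A i j : ℝ) * y j ≤ ∑ j, y j := by
        have heq : y i₀ + ∑ j, (A i j : ℝ) * y j
            = ∑ j, ((if j = i₀ then y i₀ else 0) + (A i j : ℝ) * y j) := by
          rw [Finset.sum_add_distrib, Finset.sum_ite_eq' Finset.univ i₀ fun _ => y i₀]
          simp
        rw [heq]
        apply Finset.sum_le_sum
        intro m _
        by_cases hm : m = i₀
        · subst hm
          rw [if_pos rfl]
          have : (A i m : ℝ) = 0 := by exact_mod_cast h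
          rw [this]
          simp
        · rw [if_neg hm]
          have := hAle i m
          have := hAnn i m
          have := hy0 m
          nlinarith
      rw [hyA i, hyS] at hle
      have htk : (b i).toNat ≤ k := by
        have := hbk i
        omega
      rw [fcoord, if_neg (by omega), Nat.cast_sub htk, htR]
      linarith
    · -- A i i₀ = 1
      have hsingle : (A i i₀ : ℝ) * y i₀ ≤ ∑ j, (A i j : ℝ) * y j :=
        Finset.single_le_sum (fun m _ => mul_nonneg (hAnn i m) (hy0 m)) (Finset.mem_univ i₀)
      rw [hyA i] at hsingle
      have h1 : (A i i₀ : ℝ) = 1 := by exact_mod_cast h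
      rw [h1, one_mul] at hsingle
      rw [fcoord, if_pos h, htR]
      exact hsingle
  rcases tstar_cases A i₀ b k with h | ⟨i, h⟩
  · rw [h]; exact hyk
  · rw [h]; exact hyc i

/-- The 'if' direction of Theorem 4.6, instantiated with the cube-section form of a
compressed polytope: if the columns of `A` are distinct `0/1` vectors, `A` is homogeneous,
`conv{A₁,…,A_n} = [0,1]^d ∩ affineSpan{A₁,…,A_n}`, and the only `0/1` points of the convex
hull are the columns themselves, then the LP relaxation value of `max x_i` over
`{x ≥ 0 : Ax = b}` equals the IP value for every `i` and every IP-feasible `b`. -/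
theorem lp_eq_ip_of_cube_section
    (d n : ℕ) (A : Matrix (Fin d) (Fin n) ℤ)
    (h01 : ∀ j, col A j ∈ zeroOneSet d)
    (hdist : Function.Injective (col A))
    (hhom : ∃ w : Fin d → ℝ, ∀ j : Fin n, ∑ i, w i * col A j i = 1)
    (hcube : convexHull ℝ (Set.range (col A))
      = stdCube d ∩ (affineSpan ℝ (Set.range (col A)) : Set (Fin d → ℝ)))
    (hvert : zeroOneSet d ∩ convexHull ℝ (Set.range (col A)) = Set.range (col A)) :
    ∀ (i₀ : Fin n) (b : Fin d → ℤ), (∃ x : Fin n → ℕ, ∀ i, ∑ j, A i j * (x j : ℤ) = b i) →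
      sSup {t : ℝ | ∃ x : Fin n → ℝ, (∀ j, 0 ≤ x j) ∧
          (∀ i, ∑ j, (A i j : ℝ) * x j = (b i : ℝ)) ∧ t = x i₀}
        = sSup {t : ℝ | ∃ x : Fin n → ℕ,
            (∀ i, ∑ j, A i j * (x j : ℤ) = b i) ∧ t = (x i₀ : ℝ)} := by
  rintro i₀ b ⟨x, hx⟩
  set k : ℕ := ∑ j, x j with hk
  have hxR : ∀ i, ∑ j, (A i j : ℝ) * (x j : ℝ) = (b i : ℝ) := by
    intro i
    exact_mod_cast congrArg (Int.cast : ℤ → ℝ) (hx i)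
  obtain ⟨z, hzA, hzS, hzT⟩ := master A h01 hcube i₀ k b
    ⟨fun j => (x j : ℝ), fun j => by positivity,
      by beta_reduce; exact_mod_cast congrArg (Nat.cast : ℕ → ℝ) hk.symm, hxR⟩
  have hzR : ∀ i, ∑ j, (A i j : ℝ) * (z j : ℝ) = (b i : ℝ) := by
    intro i
    exact_mod_cast congrArg (Int.cast : ℤ → ℝ) (hzA i)
  have hzU : ((z i₀ : ℕ) : ℝ) ≤ (tstar A i₀ b k : ℝ) :=
    upper A h01 hhom i₀ b k x hx rfl (fun j => (z j : ℝ)) (fun j => by positivity) hzR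
  have hzeq : z i₀ = tstar A i₀ b k := le_antisymm (by exact_mod_cast hzU) hzT
  have hLP : IsGreatest {t : ℝ | ∃ y : Fin n → ℝ, (∀ j, 0 ≤ y j) ∧
      (∀ i, ∑ j, (A i j : ℝ) * y j = (b i : ℝ)) ∧ t = y i₀} ((tstar A i₀ b k : ℕ) : ℝ) := by
    constructor
    · exact ⟨fun j => (z j : ℝ), fun j => by positivity, hzR, by rw [← hzeq]⟩
    · rintro t ⟨y, hy0, hyA, rfl⟩
      exact upper A h01 hhom i₀ b k x hx rfl y hy0 hyA
  have hIP : IsGreatest {t : ℝ | ∃ x' : Fin n → ℕ,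
      (∀ i, ∑ j, A i j * (x' j : ℤ) = b i) ∧ t = ((x' i₀ : ℕ) : ℝ)} ((tstar A i₀ b k : ℕ) : ℝ) := by
    constructor
    · exact ⟨z, hzA, by rw [← hzeq]⟩
    · rintro t ⟨x', hx', rfl⟩
      have hx'R : ∀ i, ∑ j, (A i j : ℝ) * (x' j : ℝ) = (b i : ℝ) := by
        intro i
        exact_mod_cast congrArg (Int.cast : ℤ → ℝ) (hx' i)
      exact upper A h01 hhom i₀ b k x hx rfl (fun j => (x' j : ℝ)) (fun j => by positivity) hx'R
  rw [hLP.csSup_eq, hIP.csSup_eq]
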